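/- Suppose (μ,θ) jointly satisfy E[Σ_i (r_i − m_μ(b_i)) ṁ_μ(b_i) π_θ(b,i)] = 0 and E[Σ_i m_μ(b_i) π̇_θ(b,i)] − 2λθ = 0, and the compatibility condition π̇_θ(b,i)/π_θ(b,i) = ṁ_μ(b_i) holds for all b and i. Then θ is a stationary point of the true penalized objective: E[Σ_i r_i π̇_θ(b,i)] − 2λθ = 0. -/

import Mathlib

open Finset MeasureTheory

/-! Under compatibility, `π̇_θ(b,i) = π_θ(b,i) ṁ_μ(b_i)`, so the true actor gradient
`Σ_i r_i π̇_θ(b,i)` splits pointwise into the critic residual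
`Σ_i (r_i − m_μ(b_i)) π_θ(b,i) ṁ_μ(b_i)` plus the critic-based gradient `Σ_i m_μ(b_i) π̇_θ(b,i)`.
The critic equation says the first part has mean zero, so the true gradient and the critic-based
gradient have the same expectation, and the actor equation transfers. -/

theorem sum_smul_smul_eq_sum_sub_mul_smul_add {ι R M : Type*} [CommRing R] [AddCommGroup M]
    [Module R M] (s : Finset ι) (r m p : ι → R) (v : ι → M) :
    ∑ i ∈ s, r i • p i • v i = ∑ i ∈ s, ((r i - m i) * p i) • v i + ∑ i ∈ s, m i • p i • v i := by
  rw [← sum_add_distrib]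
  refine sum_congr rfl fun i _ => ?_
  rw [smul_smul, smul_smul, ← add_smul]
  ring_nf

theorem compatibility_implies_stationary_general
    {Ω : Type*} [MeasurableSpace Ω] (P : Measure Ω)
    (d N : ℕ)
    (b : Ω → Fin N → EuclideanSpace ℝ (Fin d)) (r : Ω → Fin N → ℝ)
    (pol : (Fin N → EuclideanSpace ℝ (Fin d)) → Fin N → ℝ)
    (poldot : (Fin N → EuclideanSpace ℝ (Fin d)) → Fin N → EuclideanSpace ℝ (Fin d))
    (mc : EuclideanSpace ℝ (Fin d) → ℝ)
    (mdot : EuclideanSpace ℝ (Fin d) → EuclideanSpace ℝ (Fin d))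
    (lam : ℝ) (θ : EuclideanSpace ℝ (Fin d))
    (hint1 : Integrable (fun ω => ∑ i : Fin N,
        ((r ω i - mc (b ω i)) * pol (b ω) i) • mdot (b ω i)) P)
    (hint2 : Integrable (fun ω => ∑ i : Fin N, mc (b ω i) • poldot (b ω) i) P)
    (hcritic : ∫ ω, ∑ i : Fin N,
        ((r ω i - mc (b ω i)) * pol (b ω) i) • mdot (b ω i) ∂P = 0)
    (hactor : (∫ ω, ∑ i : Fin N, mc (b ω i) • poldot (b ω) i ∂P) - (2 * lam) • θ = 0)
    (hcompat : ∀ (c : Fin N → EuclideanSpace ℝ (Fin d)) (i : Fin N),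
        poldot c i = pol c i • mdot (c i)) :
    (∫ ω, ∑ i : Fin N, r ω i • poldot (b ω) i ∂P) - (2 * lam) • θ = 0 := by
  have hsplit : (fun ω => ∑ i : Fin N, r ω i • poldot (b ω) i) = fun ω =>
      (∑ i : Fin N, ((r ω i - mc (b ω i)) * pol (b ω) i) • mdot (b ω i))
        + ∑ i : Fin N, mc (b ω i) • poldot (b ω) i := by
    funext ω
    simp only [hcompat]
    exact sum_smul_smul_eq_sum_sub_mul_smul_add _ _ _ _ _
  rw [hsplit, integral_add hint1 hint2, hcritic, zero_add, hactor]

/-- If (μ,θ) jointly solve the critic and penalized-actor estimating equations and the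
compatibility condition holds, then θ is a stationary point of the true penalized
objective: E[Σ_i r_i π̇_θ(b,i)] − 2λθ = 0. -/
theorem compatibility_implies_stationary
    {Ω : Type*} [MeasurableSpace Ω] (P : Measure Ω) [IsProbabilityMeasure P]
    (d N : ℕ)
    (b : Ω → Fin N → EuclideanSpace ℝ (Fin d)) (r : Ω → Fin N → ℝ)
    (pol : (Fin N → EuclideanSpace ℝ (Fin d)) → Fin N → ℝ)
    (poldot : (Fin N → EuclideanSpace ℝ (Fin d)) → Fin N → EuclideanSpace ℝ (Fin d))
    (mc : EuclideanSpace ℝ (Fin d) → ℝ)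
    (mdot : EuclideanSpace ℝ (Fin d) → EuclideanSpace ℝ (Fin d))
    (lam : ℝ) (hlam : 0 < lam) (θ : EuclideanSpace ℝ (Fin d))
    (hint1 : Integrable (fun ω => ∑ i : Fin N,
        ((r ω i - mc (b ω i)) * pol (b ω) i) • mdot (b ω i)) P)
    (hint2 : Integrable (fun ω => ∑ i : Fin N, mc (b ω i) • poldot (b ω) i) P)
    (hcritic : ∫ ω, ∑ i : Fin N,
        ((r ω i - mc (b ω i)) * pol (b ω) i) • mdot (b ω i) ∂P = 0)
    (hactor : (∫ ω, ∑ i : Fin N, mc (b ω i) • poldot (b ω) i ∂P) - (2 * lam) • θ = 0)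
    (hcompat : ∀ (c : Fin N → EuclideanSpace ℝ (Fin d)) (i : Fin N),
        poldot c i = pol c i • mdot (c i)) :
    (∫ ω, ∑ i : Fin N, r ω i • poldot (b ω) i ∂P) - (2 * lam) • θ = 0 :=
  compatibility_implies_stationary_general P d N b r pol poldot mc mdot lam θ hint1 hint2 hcritic
    hactor hcompat
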